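/- arXiv:2604.01821 — 3 statements merged into one kernel-verified Lean document; each statement's English description precedes it below -/
import Mathlib

section
/- For probability measures P and Q on a measurable space Ω and any Markov kernel K from Ω to a measurable space Ω′, the trade-off function can only increase under post-processing: T(KP, KQ)(α) ≥ T(P, Q)(α) for all α ∈ [0,1], where KP denotes the mixture measure ∫ K(ω) dP(ω) on Ω′ and likewise for KQ. -/
/-!
A test `φ` on `Ω'` pulls back along `K` to the test `ω ↦ ∫ φ d(K ω)` on `Ω`, whose type I and
type II errors under `P` and `Q` are those of `φ` under `KP` and `KQ`. So every pair of errors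
achievable after post-processing is already achievable before, and the infimum defining the
trade-off function can only be smaller before.
-/

open MeasureTheory ProbabilityTheory
open scoped ProbabilityTheory NNReal ENNReal

/-- The trade-off function `T(P,Q)(α) = inf {∫ (1-φ) dQ : φ a test with ∫ φ dP ≤ α}`,
where a test is a measurable function with values in `[0,1]`. -/
noncomputable def tradeoff {Ω : Type*} [MeasurableSpace Ω] (P Q : Measure Ω) (α : ℝ) : ℝ :=
  sInf { r : ℝ | ∃ φ : Ω → ℝ, Measurable φ ∧ (∀ ω, 0 ≤ φ ω) ∧ (∀ ω, φ ω ≤ 1) ∧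
    (∫ ω, φ ω ∂P) ≤ α ∧ r = ∫ ω, (1 - φ ω) ∂Q }


lemma MeasureTheory.Measure.integral_bind {Ω Ω' E : Type*} [MeasurableSpace Ω]
    [MeasurableSpace Ω'] [NormedAddCommGroup E] [NormedSpace ℝ E]
    {μ : Measure Ω} {κ : Kernel Ω Ω'} {f : Ω' → E} (hf : Integrable f (μ.bind κ)) :
    ∫ y, f y ∂(μ.bind κ) = ∫ x, ∫ y, f y ∂κ x ∂μ := by
  rw [Measure.comp_eq_comp_const_apply] at hf ⊢
  exact Kernel.integral_comp hf

section Tests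

variable {Ω : Type*} [MeasurableSpace Ω]

lemma tradeoff_le_integral {P Q : Measure Ω} {α : ℝ} {φ : Ω → ℝ} (hφ : Measurable φ)
    (hφ0 : ∀ ω, 0 ≤ φ ω) (hφ1 : ∀ ω, φ ω ≤ 1) (hφP : ∫ ω, φ ω ∂P ≤ α) :
    tradeoff P Q α ≤ ∫ ω, (1 - φ ω) ∂Q := by
  refine csInf_le ⟨0, ?_⟩ ⟨φ, hφ, hφ0, hφ1, hφP, rfl⟩
  rintro r ⟨ψ, -, -, hψ1, -, rfl⟩
  exact integral_nonneg fun ω => sub_nonneg.mpr (hψ1 ω)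

lemma le_tradeoff {P Q : Measure Ω} {α c : ℝ} (hα : 0 ≤ α)
    (h : ∀ φ : Ω → ℝ, Measurable φ → (∀ ω, 0 ≤ φ ω) → (∀ ω, φ ω ≤ 1) →
      ∫ ω, φ ω ∂P ≤ α → c ≤ ∫ ω, (1 - φ ω) ∂Q) :
    c ≤ tradeoff P Q α := by
  refine le_csInf ⟨_, 0, measurable_const, fun _ => le_rfl, fun _ => zero_le_one, by simpa, rfl⟩ ?_
  rintro r ⟨φ, hφ, hφ0, hφ1, hφP, rfl⟩
  exact h φ hφ hφ0 hφ1 hφP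

lemma integrable_of_nonneg_of_le_one {μ : Measure Ω} [IsFiniteMeasure μ] {φ : Ω → ℝ}
    (hφ : Measurable φ) (hφ0 : ∀ ω, 0 ≤ φ ω) (hφ1 : ∀ ω, φ ω ≤ 1) : Integrable φ μ :=
  .of_bound hφ.aestronglyMeasurable 1 <| .of_forall fun ω => by
    rw [Real.norm_of_nonneg (hφ0 ω)]; exact hφ1 ω

lemma integral_one_sub {μ : Measure Ω} [IsProbabilityMeasure μ] {φ : Ω → ℝ}
    (hφ : Integrable φ μ) : ∫ ω, (1 - φ ω) ∂μ = 1 - ∫ ω, φ ω ∂μ := by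
  rw [integral_sub (integrable_const 1) hφ, integral_const, probReal_univ, one_smul]

end Tests

/-- Post-processing can only increase the trade-off function: for probability measures
`P, Q` on `Ω` and any Markov kernel `K` from `Ω` to `Ω'`,
`T(KP, KQ)(α) ≥ T(P,Q)(α)` for all `α ∈ [0,1]`. -/
theorem tradeoff_postprocessing {Ω Ω' : Type*} [MeasurableSpace Ω] [MeasurableSpace Ω']
    (P Q : Measure Ω) [IsProbabilityMeasure P] [IsProbabilityMeasure Q]
    (K : Kernel Ω Ω') [IsMarkovKernel K] :
    ∀ α ∈ Set.Icc (0 : ℝ) 1,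
      tradeoff P Q α ≤ tradeoff (P.bind fun ω => K ω) (Q.bind fun ω => K ω) α := by
  rintro α ⟨hα, -⟩
  refine le_tradeoff hα fun φ hφ hφ0 hφ1 hφP => ?_
  have hφint (μ : Measure Ω) [IsProbabilityMeasure μ] : Integrable φ (μ.bind K) :=
    integrable_of_nonneg_of_le_one hφ hφ0 hφ1
  set ψ : Ω → ℝ := fun ω => ∫ x, φ x ∂K ω
  have hψ : Measurable ψ := hφ.stronglyMeasurable.integral_kernel.measurable
  have hψ0 (ω : Ω) : 0 ≤ ψ ω := integral_nonneg hφ0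
  have hψ1 (ω : Ω) : ψ ω ≤ 1 := by
    simpa using integral_mono (integrable_of_nonneg_of_le_one (μ := K ω) hφ hφ0 hφ1)
      (integrable_const 1) hφ1
  calc tradeoff P Q α ≤ ∫ ω, (1 - ψ ω) ∂Q :=
        tradeoff_le_integral hψ hψ0 hψ1 (by rwa [← Measure.integral_bind (hφint P)])
    _ = ∫ x, (1 - φ x) ∂(Q.bind K) := by
        rw [integral_one_sub (integrable_of_nonneg_of_le_one hψ hψ0 hψ1),
          integral_one_sub (hφint Q), Measure.integral_bind (hφint Q)]
end

section
/- For every μ ≥ 0 and every α ∈ (0,1), the Gaussian trade-off function admits the closed form G_μ(α) = Φ(Φ⁻¹(1 − α) − μ), where Φ is the cumulative distribution function of the standard Gaussian measure N(0,1) on ℝ and Φ⁻¹ is its inverse on (0,1). -/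
open MeasureTheory ProbabilityTheory
open scoped ProbabilityTheory NNReal ENNReal

/-- The Gaussian trade-off function `G_μ = T(N(0,1), N(μ,1))`. -/
noncomputable def Gtrade (μ : ℝ) : ℝ → ℝ :=
  tradeoff (gaussianReal 0 1) (gaussianReal μ 1)

/-!
Neyman–Pearson. For `μ ≥ 0` the likelihood ratio `dN(μ,v)/dN(0,v)(x) = exp((μx - μ²/2)/v)` is
nondecreasing, so with `c` its value at `t` we have `N(μ,v) ≥ c • N(0,v)` on `[t, ∞)` and
`N(μ,v) ≤ c • N(0,v)` on `(-∞, t)`. For a test `φ` of level `N(0,v)[t, ∞) = 1 - Φ(t)`, the function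
`d = 1_{[t,∞)} - φ` is nonnegative on `[t, ∞)` and nonpositive off it, whence
`∫ d dN(μ,v) ≥ c ∫ d dN(0,v) ≥ 0`: the indicator of `[t, ∞)` is most powerful, and its type II
error is `N(μ,v)(-∞, t) = Φ(t - μ)`.
-/

open Set

section NeymanPearson

variable {Ω : Type*} [MeasurableSpace Ω]

lemma withDensity_restrict_smul_le {ν : Measure Ω} {f g : Ω → ℝ≥0∞} {A : Set Ω}
    (hA : MeasurableSet A) {c : ℝ≥0} (h : ∀ x ∈ A, c * f x ≤ g x) :
    c • (ν.withDensity f).restrict A ≤ (ν.withDensity g).restrict A := by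
  rw [restrict_withDensity hA, restrict_withDensity hA, ENNReal.smul_def,
    ← withDensity_smul' _ _ ENNReal.coe_ne_top]
  exact withDensity_mono (ae_restrict_of_forall_mem hA h)

lemma withDensity_restrict_le_smul {ν : Measure Ω} {f g : Ω → ℝ≥0∞} {A : Set Ω}
    (hA : MeasurableSet A) {c : ℝ≥0} (h : ∀ x ∈ A, g x ≤ c * f x) :
    (ν.withDensity g).restrict A ≤ c • (ν.withDensity f).restrict A := by
  rw [restrict_withDensity hA, restrict_withDensity hA, ENNReal.smul_def,
    ← withDensity_smul' _ _ ENNReal.coe_ne_top]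
  exact withDensity_mono (ae_restrict_of_forall_mem hA h)

def IsTest (φ : Ω → ℝ) : Prop := Measurable φ ∧ ∀ ω, φ ω ∈ Icc 0 1

lemma IsTest.integrable {φ : Ω → ℝ} (hφ : IsTest φ) (P : Measure Ω) [IsFiniteMeasure P] :
    Integrable φ P :=
  .of_mem_Icc 0 1 hφ.1.aemeasurable (ae_of_all _ hφ.2)

lemma isTest_indicator_one {A : Set Ω} (hA : MeasurableSet A) : IsTest (A.indicator 1) :=
  ⟨measurable_one.indicator hA, fun ω => by by_cases h : ω ∈ A <;> simp [h]⟩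

lemma tradeoff_eq_integral_of_optimal {P Q : Measure Ω} {α : ℝ} {φ₀ : Ω → ℝ} (h₀ : IsTest φ₀)
    (hα : ∫ ω, φ₀ ω ∂P ≤ α)
    (hopt : ∀ φ, IsTest φ → ∫ ω, φ ω ∂P ≤ α → ∫ ω, (1 - φ₀ ω) ∂Q ≤ ∫ ω, (1 - φ ω) ∂Q) :
    tradeoff P Q α = ∫ ω, (1 - φ₀ ω) ∂Q := by
  refine IsLeast.csInf_eq ⟨⟨φ₀, h₀.1, fun ω => (h₀.2 ω).1, fun ω => (h₀.2 ω).2, hα, rfl⟩, ?_⟩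
  rintro _ ⟨φ, hm, h0, h1, hφ, rfl⟩
  exact hopt φ ⟨hm, fun ω => ⟨h0 ω, h1 ω⟩⟩ hφ

theorem integral_le_measureReal_of_neymanPearson {P Q : Measure Ω} [IsFiniteMeasure P]
    [IsFiniteMeasure Q] {A : Set Ω} (hA : MeasurableSet A) {c : ℝ≥0}
    (hA_le : c • P.restrict A ≤ Q.restrict A) (hAc_le : Q.restrict Aᶜ ≤ c • P.restrict Aᶜ)
    {φ : Ω → ℝ} (hφ : IsTest φ) (hφP : ∫ ω, φ ω ∂P ≤ P.real A) :
    ∫ ω, φ ω ∂Q ≤ Q.real A := by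
  set d : Ω → ℝ := A.indicator 1 - φ
  have hd_int (ν : Measure Ω) [IsFiniteMeasure ν] : Integrable d ν :=
    ((isTest_indicator_one hA).integrable ν).sub (hφ.integrable ν)
  have hd_integral (ν : Measure Ω) [IsFiniteMeasure ν] :
      (∫ ω, d ω ∂ν) = ν.real A - ∫ ω, φ ω ∂ν := by
    rw [← integral_indicator_one hA, ← integral_sub ((isTest_indicator_one hA).integrable ν)
      (hφ.integrable ν)]
    rfl
  have hd_A : c * ∫ ω in A, d ω ∂P ≤ ∫ ω in A, d ω ∂Q := by
    rw [← smul_eq_mul, ← NNReal.smul_def, ← integral_smul_nnreal_measure]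
    refine integral_mono_measure hA_le (ae_restrict_of_forall_mem hA fun ω hω => ?_)
      (hd_int _).restrict
    simp [d, hω, (hφ.2 ω).2]
  have hd_Ac : c * ∫ ω in Aᶜ, d ω ∂P ≤ ∫ ω in Aᶜ, d ω ∂Q := by
    have : ∫ ω in Aᶜ, -d ω ∂Q ≤ ∫ ω, -d ω ∂(c • P.restrict Aᶜ) :=
      integral_mono_measure hAc_le (Measure.ae_smul_measure (ae_restrict_of_forall_mem hA.compl
        fun ω hω => by simp [d, indicator_of_notMem hω, (hφ.2 ω).1]) c) (hd_int _).neg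
    rw [integral_smul_nnreal_measure, integral_neg, integral_neg, NNReal.smul_def,
      smul_eq_mul] at this
    linarith
  have hPQ : c * ∫ ω, d ω ∂P ≤ ∫ ω, d ω ∂Q := by
    rw [← integral_add_compl hA (hd_int P), ← integral_add_compl hA (hd_int Q)]
    linarith
  have hP : 0 ≤ ∫ ω, d ω ∂P := by rw [hd_integral]; linarith
  have hQ : 0 ≤ ∫ ω, d ω ∂Q := (mul_nonneg c.2 hP).trans hPQ
  rw [hd_integral] at hQ
  linarith

theorem tradeoff_measureReal_eq_of_neymanPearson {P Q : Measure Ω} [IsFiniteMeasure P]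
    [IsProbabilityMeasure Q] {A : Set Ω} (hA : MeasurableSet A) {c : ℝ≥0}
    (hA_le : c • P.restrict A ≤ Q.restrict A) (hAc_le : Q.restrict Aᶜ ≤ c • P.restrict Aᶜ) :
    tradeoff P Q (P.real A) = Q.real Aᶜ := by
  have h_one_sub {φ : Ω → ℝ} (hφ : IsTest φ) : ∫ ω, (1 - φ ω) ∂Q = 1 - ∫ ω, φ ω ∂Q := by
    rw [integral_sub (integrable_const 1) (hφ.integrable Q), integral_const, probReal_univ,
      one_smul]
  have hA_test := isTest_indicator_one hA
  rw [probReal_compl_eq_one_sub hA, ← integral_indicator_one (μ := Q) hA, ← h_one_sub hA_test]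
  refine tradeoff_eq_integral_of_optimal hA_test (integral_indicator_one hA).le fun φ hφ hφP => ?_
  rw [h_one_sub hφ, h_one_sub hA_test, integral_indicator_one hA]
  linarith [integral_le_measureReal_of_neymanPearson hA hA_le hAc_le hφ hφP]

end NeymanPearson

lemma measureReal_Iio_eq_cdf {P : Measure ℝ} [IsProbabilityMeasure P] [NullSingletonClass P]
    (t : ℝ) : P.real (Iio t) = cdf P t := by
  rw [measureReal_congr Iio_ae_eq_Iic, cdf_eq_real]

lemma measureReal_Ici_eq_one_sub_cdf {P : Measure ℝ} [IsProbabilityMeasure P]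
    [NullSingletonClass P] (t : ℝ) : P.real (Ici t) = 1 - cdf P t := by
  rw [← compl_Iio, probReal_compl_eq_one_sub measurableSet_Iio, measureReal_Iio_eq_cdf]

section Gaussian

open Real

variable {μ : ℝ} {v : ℝ≥0}

lemma gaussianPDFReal_eq_mul_exp (μ : ℝ) (v : ℝ≥0) (x : ℝ) :
    gaussianPDFReal μ v x = gaussianPDFReal 0 v x * exp ((μ * x - μ ^ 2 / 2) / v) := by
  simp only [gaussianPDFReal, mul_assoc, ← exp_add]
  congr 2
  ring

lemma gaussianPDF_eq_exp_mul (μ : ℝ) (v : ℝ≥0) (x : ℝ) :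
    gaussianPDF μ v x = (exp ((μ * x - μ ^ 2 / 2) / v)).toNNReal * gaussianPDF 0 v x := by
  rw [gaussianPDF, gaussianPDF, gaussianPDFReal_eq_mul_exp μ, mul_comm,
    ENNReal.ofReal_mul (exp_pos _).le]
  rfl

lemma gaussianReal_smul_restrict_Ici_le (hμ : 0 ≤ μ) (hv : v ≠ 0) (t : ℝ) :
    (exp ((μ * t - μ ^ 2 / 2) / v)).toNNReal • (gaussianReal 0 v).restrict (Ici t) ≤
      (gaussianReal μ v).restrict (Ici t) := by
  rw [gaussianReal_of_var_ne_zero 0 hv, gaussianReal_of_var_ne_zero μ hv]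
  refine withDensity_restrict_smul_le measurableSet_Ici fun x (hx : t ≤ x) => ?_
  rw [gaussianPDF_eq_exp_mul μ]
  gcongr

lemma gaussianReal_restrict_Iio_le_smul (hμ : 0 ≤ μ) (hv : v ≠ 0) (t : ℝ) :
    (gaussianReal μ v).restrict (Iio t) ≤
      (exp ((μ * t - μ ^ 2 / 2) / v)).toNNReal • (gaussianReal 0 v).restrict (Iio t) := by
  rw [gaussianReal_of_var_ne_zero 0 hv, gaussianReal_of_var_ne_zero μ hv]
  refine withDensity_restrict_le_smul measurableSet_Iio fun x (hx : x < t) => ?_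
  rw [gaussianPDF_eq_exp_mul μ]
  gcongr

lemma cdf_gaussianReal (μ : ℝ) (v : ℝ≥0) (x : ℝ) :
    cdf (gaussianReal μ v) x = cdf (gaussianReal 0 v) (x - μ) := by
  rw [cdf_eq_real, cdf_eq_real, ← zero_add μ, ← gaussianReal_map_add_const,
    map_measureReal_apply (measurable_add_const μ) measurableSet_Iic]
  congr
  ext y
  simp

theorem tradeoff_gaussianReal (hμ : 0 ≤ μ) (hv : v ≠ 0) (t : ℝ) :
    tradeoff (gaussianReal 0 v) (gaussianReal μ v) (1 - cdf (gaussianReal 0 v) t) =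
      cdf (gaussianReal 0 v) (t - μ) := by
  have := nullSingletonClass_gaussianReal (μ := 0) hv
  have := nullSingletonClass_gaussianReal (μ := μ) hv
  have h := tradeoff_measureReal_eq_of_neymanPearson measurableSet_Ici
    (gaussianReal_smul_restrict_Ici_le hμ hv t)
    (by rw [compl_Ici]; exact gaussianReal_restrict_Iio_le_smul hμ hv t)
  rwa [measureReal_Ici_eq_one_sub_cdf, compl_Ici, measureReal_Iio_eq_cdf, cdf_gaussianReal μ] at h

end Gaussian

/-- Closed form for the Gaussian trade-off function: for `μ ≥ 0` and `α ∈ (0,1)`,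
`G_μ(α) = Φ(Φ⁻¹(1 − α) − μ)`, where `Φ` is the standard Gaussian CDF and `Φinv` is
any inverse of `Φ` on `(0,1)`. -/
theorem gaussian_tradeoff_closed_form (μ : ℝ) (hμ : 0 ≤ μ)
    (Φinv : ℝ → ℝ)
    (hΦinv : ∀ y ∈ Set.Ioo (0 : ℝ) 1, cdf (gaussianReal 0 1) (Φinv y) = y) :
    ∀ α ∈ Set.Ioo (0 : ℝ) 1,
      Gtrade μ α = cdf (gaussianReal 0 1) (Φinv (1 - α) - μ) := by
  rintro α ⟨hα0, hα1⟩
  have h := tradeoff_gaussianReal hμ one_ne_zero (Φinv (1 - α))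
  rwa [hΦinv (1 - α) ⟨by linarith, by linarith⟩, sub_sub_cancel] at h
end

section
/- Let d ∈ ℕ, σ > 0, and a, b ∈ ℝ^d. Let N(a, σ²I_d) denote the product measure ⊗_{i=1}^d N(a_i, σ²) on ℝ^d, where N(m, σ²) is the Gaussian measure on ℝ with mean m and variance σ². Then the trade-off function between the two shifted isotropic Gaussians is Gaussian: T(N(a, σ²I_d), N(b, σ²I_d))(α) = G_{‖a−b‖₂/σ}(α) for all α ∈ [0,1], where ‖·‖₂ is the Euclidean norm on ℝ^d. -/
open MeasureTheory ProbabilityTheory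
open scoped ProbabilityTheory NNReal ENNReal

/-!
After the affine change of variables `x ↦ (x - a) / σ` the two product measures become the
standard Gaussian `γ` on `ℝ^d` and its translate by `w = (b - a) / σ`, and trade-off functions are
invariant under measurable bijections. Since `γ` is invariant under rotations, `w` may be rotated
onto `‖w‖ e₀`; the two measures then differ only in the first coordinate. An independent component
with the same law under both hypotheses does not change the trade-off function, because a test can
be averaged over it, which leaves `T(N(0,1), N(‖w‖,1))`.
-/

section Tradeoff

variable {Ω Ω' : Type*} [MeasurableSpace Ω] [MeasurableSpace Ω']

def typeIIErrors (P Q : Measure Ω) (α : ℝ) : Set ℝ :=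
  { r : ℝ | ∃ φ : Ω → ℝ, Measurable φ ∧ (∀ ω, 0 ≤ φ ω) ∧ (∀ ω, φ ω ≤ 1) ∧
    (∫ ω, φ ω ∂P) ≤ α ∧ r = ∫ ω, (1 - φ ω) ∂Q }

lemma tradeoff_eq_sInf (P Q : Measure Ω) (α : ℝ) : tradeoff P Q α = sInf (typeIIErrors P Q α) :=
  rfl

lemma bddBelow_typeIIErrors (P Q : Measure Ω) (α : ℝ) : BddBelow (typeIIErrors P Q α) := by
  refine ⟨0, ?_⟩
  rintro _ ⟨φ, -, -, hφ1, -, rfl⟩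
  exact integral_nonneg fun ω => sub_nonneg.2 (hφ1 ω)

lemma typeIIErrors_nonempty (P Q : Measure Ω) {α : ℝ} (hα : 0 ≤ α) :
    (typeIIErrors P Q α).Nonempty :=
  ⟨_, 0, measurable_const, fun _ => le_rfl, fun _ => zero_le_one, by simpa using hα, rfl⟩

lemma integrable_of_test (μ : Measure Ω) [IsFiniteMeasure μ] {φ : Ω → ℝ} (hφ : Measurable φ)
    (hφ0 : ∀ ω, 0 ≤ φ ω) (hφ1 : ∀ ω, φ ω ≤ 1) : Integrable φ μ :=
  .of_bound hφ.aestronglyMeasurable 1 <| ae_of_all _ fun ω => by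
    rw [Real.norm_eq_abs, abs_le]
    exact ⟨by linarith [hφ0 ω], hφ1 ω⟩

lemma tradeoff_map_measurableEquiv (e : Ω ≃ᵐ Ω') (P Q : Measure Ω) (α : ℝ) :
    tradeoff (P.map e) (Q.map e) α = tradeoff P Q α := by
  simp only [tradeoff_eq_sInf, typeIIErrors, integral_map_equiv]
  congr 1
  ext r
  constructor
  · rintro ⟨φ, hφ, hφ0, hφ1, hP, rfl⟩
    exact ⟨φ ∘ e, hφ.comp e.measurable, fun _ => hφ0 _, fun _ => hφ1 _, hP, rfl⟩
  · rintro ⟨φ, hφ, hφ0, hφ1, hP, rfl⟩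
    exact ⟨φ ∘ e.symm, hφ.comp e.symm.measurable, fun _ => hφ0 _, fun _ => hφ1 _,
      by simpa using hP, by simp⟩

lemma tradeoff_le_tradeoff_map (P Q : Measure Ω) {f : Ω → Ω'} (hf : Measurable f) {α : ℝ}
    (hα : 0 ≤ α) : tradeoff P Q α ≤ tradeoff (P.map f) (Q.map f) α := by
  refine csInf_le_csInf (bddBelow_typeIIErrors P Q α) (typeIIErrors_nonempty _ _ hα) ?_
  rintro _ ⟨φ, hφ, hφ0, hφ1, hP, rfl⟩
  refine ⟨φ ∘ f, hφ.comp hf, fun _ => hφ0 _, fun _ => hφ1 _, ?_, ?_⟩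
  · rwa [integral_map hf.aemeasurable hφ.aestronglyMeasurable] at hP
  · rw [integral_map hf.aemeasurable (hφ.const_sub 1).aestronglyMeasurable]
    rfl

lemma tradeoff_self (P : Measure Ω) [IsProbabilityMeasure P] {α : ℝ} (hα0 : 0 ≤ α)
    (hα1 : α ≤ 1) : tradeoff P P α = 1 - α := by
  refine le_antisymm (csInf_le (bddBelow_typeIIErrors P P α) ?_)
    (le_csInf (typeIIErrors_nonempty P P hα0) ?_)
  · exact ⟨fun _ => α, measurable_const, fun _ => hα0, fun _ => hα1, by simp, by simp⟩
  · rintro _ ⟨φ, hφ, hφ0, hφ1, hP, rfl⟩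
    rw [integral_sub (integrable_const 1) (integrable_of_test P hφ hφ0 hφ1)]
    simp only [integral_const, probReal_univ, smul_eq_mul, one_mul]
    linarith

lemma tradeoff_prod_right {Ω₁ Ω₂ : Type*} [MeasurableSpace Ω₁] [MeasurableSpace Ω₂]
    (P Q : Measure Ω₁) [IsFiniteMeasure P] [IsFiniteMeasure Q] (ν : Measure Ω₂)
    [IsProbabilityMeasure ν] {α : ℝ} (hα : 0 ≤ α) :
    tradeoff (P.prod ν) (Q.prod ν) α = tradeoff P Q α := by
  refine le_antisymm ?_ ?_
  · simpa [Measure.map_fst_prod] using tradeoff_le_tradeoff_map (P.prod ν) (Q.prod ν)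
      measurable_fst hα
  refine csInf_le_csInf (bddBelow_typeIIErrors P Q α) (typeIIErrors_nonempty _ _ hα) ?_
  rintro _ ⟨φ, hφ, hφ0, hφ1, hP, rfl⟩
  -- the averaged test `x ↦ ∫ φ(x, y) dν(y)` has the same errors as `φ`
  have hφx : ∀ x, Integrable (fun y => φ (x, y)) ν := fun x =>
    integrable_of_test ν (hφ.comp measurable_prodMk_left) (fun _ => hφ0 _) (fun _ => hφ1 _)
  refine ⟨fun x => ∫ y, φ (x, y) ∂ν, hφ.stronglyMeasurable.integral_prod_right'.measurable,
    fun x => integral_nonneg fun y => hφ0 _, fun x => ?_, ?_, ?_⟩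
  · calc ∫ y, φ (x, y) ∂ν ≤ ∫ _, (1 : ℝ) ∂ν :=
          integral_mono (hφx x) (integrable_const 1) fun y => hφ1 _
      _ = 1 := by simp
  · rwa [← integral_prod φ (integrable_of_test _ hφ hφ0 hφ1)]
  · rw [integral_prod (fun ω => 1 - φ ω)
      ((integrable_const 1).sub (integrable_of_test _ hφ hφ0 hφ1))]
    congr 1 with x
    rw [integral_sub (integrable_const 1) (hφx x)]
    simp

end Tradeoff

open Module WithLp

lemma exists_linearIsometryEquiv_apply_eq_single {E : Type*} [NormedAddCommGroup E]
    [InnerProductSpace ℝ E] [FiniteDimensional ℝ E] {n : ℕ} (hn : finrank ℝ E = n + 1) (w : E) :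
    ∃ f : E ≃ₗᵢ[ℝ] EuclideanSpace ℝ (Fin (n + 1)), f w = EuclideanSpace.single 0 ‖w‖ := by
  let b := (stdOrthonormalBasis ℝ E).reindex (finCongr hn)
  have hw : ‖w‖ = ‖‖w‖ • b 0‖ := by simp [norm_smul, b.orthonormal.1 0]
  refine ⟨(Submodule.reflection (ℝ ∙ (w - ‖w‖ • b 0))ᗮ).trans b.repr, ?_⟩
  rw [LinearIsometryEquiv.trans_apply, Submodule.reflection_sub hw, map_smul, b.repr_self]
  ext i
  simp

lemma map_linearIsometryEquiv_map_add_const {E F : Type*} [NormedAddCommGroup E]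
    [InnerProductSpace ℝ E] [MeasurableSpace E] [BorelSpace E] [NormedAddCommGroup F]
    [InnerProductSpace ℝ F] [MeasurableSpace F] [BorelSpace F] (μ : Measure E) (f : E ≃ₗᵢ[ℝ] F)
    (w : E) : (μ.map (· + w)).map f = (μ.map f).map (· + f w) := by
  rw [Measure.map_map (by fun_prop) (by fun_prop), Measure.map_map (by fun_prop) (by fun_prop)]
  congr 1
  ext x
  simp

section Gaussian

lemma gaussianReal_map_const_mul_add (σ m : ℝ) :
    (gaussianReal 0 1).map (fun t => σ * t + m) = gaussianReal m (σ ^ 2).toNNReal := by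
  have : (fun t : ℝ => σ * t + m) = (· + m) ∘ (σ * ·) := rfl
  rw [this, ← Measure.map_map (by fun_prop) (by fun_prop), gaussianReal_map_const_mul,
    gaussianReal_map_add_const]
  congr
  · ring
  · ext
    simp [sq_nonneg]

variable {ι : Type*} [Fintype ι]

lemma pi_gaussianReal_eq_map (m : ι → ℝ) (σ : ℝ) :
    Measure.pi (fun i => gaussianReal (m i) (σ ^ 2).toNNReal)
      = (Measure.pi fun _ : ι => gaussianReal 0 1).map (fun x => σ • x + m) :=
  ((measurePreserving_pi _ _ fun i =>
    ⟨by fun_prop, gaussianReal_map_const_mul_add σ (m i)⟩).map_eq).symm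

lemma map_toLp_pi_gaussianReal (m : ι → ℝ) (σ : ℝ) :
    (Measure.pi fun i => gaussianReal (m i) (σ ^ 2).toNNReal).map (toLp 2)
      = (stdGaussian (EuclideanSpace ℝ ι)).map (fun x => σ • x + toLp 2 m) := by
  rw [pi_gaussianReal_eq_map, ← map_pi_eq_stdGaussian, Measure.map_map (by fun_prop) (by fun_prop),
    Measure.map_map (by fun_prop) (by fun_prop)]
  rfl

variable {E : Type*} [NormedAddCommGroup E] [InnerProductSpace ℝ E] [FiniteDimensional ℝ E]
  [MeasurableSpace E] [BorelSpace E]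

lemma tradeoff_stdGaussian_map_add_single {n : ℕ} (c : ℝ) {α : ℝ} (hα : 0 ≤ α) :
    tradeoff (stdGaussian (EuclideanSpace ℝ (Fin (n + 1))))
      ((stdGaussian _).map (· + EuclideanSpace.single 0 c)) α = Gtrade c α := by
  let e := (MeasurableEquiv.toLp 2 (Fin (n + 1) → ℝ)).symm.trans
    (MeasurableEquiv.piFinSuccAbove (fun _ => ℝ) 0)
  have hsplit (v : Fin (n + 1) → ℝ) : ((stdGaussian _).map (· + toLp 2 v)).map e
      = (gaussianReal (v 0) 1).prod
          (Measure.pi fun j => gaussianReal (v (Fin.succAbove 0 j)) 1) := by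
    have := map_toLp_pi_gaussianReal v 1
    simp only [one_pow, Real.toNNReal_one, one_smul] at this
    rw [← this, Measure.map_map e.measurable (by fun_prop)]
    exact (measurePreserving_piFinSuccAbove (fun i => gaussianReal (v i) 1) 0).map_eq
  have h0 : (stdGaussian (EuclideanSpace ℝ (Fin (n + 1)))).map e
      = (gaussianReal 0 1).prod (Measure.pi fun _ : Fin n => gaussianReal 0 1) := by
    simpa using hsplit 0
  have hc : ((stdGaussian _).map (· + EuclideanSpace.single 0 c)).map e
      = (gaussianReal c 1).prod (Measure.pi fun _ : Fin n => gaussianReal 0 1) := by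
    simpa [Pi.single_apply] using hsplit (Pi.single 0 c)
  rw [← tradeoff_map_measurableEquiv e, h0, hc, tradeoff_prod_right _ _ _ hα, Gtrade]

lemma tradeoff_stdGaussian_map_add (w : E) {α : ℝ} (hα0 : 0 ≤ α) (hα1 : α ≤ 1) :
    tradeoff (stdGaussian E) ((stdGaussian E).map (· + w)) α = Gtrade ‖w‖ α := by
  rcases hn : finrank ℝ E with _ | n
  · have : Subsingleton E := finrank_zero_iff.1 hn
    rw [Subsingleton.elim w 0]
    simp [Gtrade, tradeoff_self, hα0, hα1]
  · obtain ⟨f, hf⟩ := exists_linearIsometryEquiv_apply_eq_single hn w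
    rw [← tradeoff_map_measurableEquiv f.toMeasurableEquiv, f.coe_toMeasurableEquiv,
      map_linearIsometryEquiv_map_add_const, stdGaussian_map, hf]
    exact tradeoff_stdGaussian_map_add_single ‖w‖ hα0

lemma tradeoff_stdGaussian_map_smul_add {σ : ℝ} (hσ : σ ≠ 0) (m₁ m₂ : E) {α : ℝ} (hα0 : 0 ≤ α)
    (hα1 : α ≤ 1) :
    tradeoff ((stdGaussian E).map (fun x => σ • x + m₁))
      ((stdGaussian E).map (fun x => σ • x + m₂)) α = Gtrade (‖m₁ - m₂‖ / |σ|) α := by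
  let A := ((Homeomorph.smulOfNeZero σ hσ).trans (Homeomorph.addRight m₁)).toMeasurableEquiv
  have hA : (fun x : E => σ • x + m₂) = A ∘ (· + σ⁻¹ • (m₂ - m₁)) := by
    ext x
    simp [A, smul_add, hσ, add_assoc]
  rw [hA, ← Measure.map_map A.measurable (by fun_prop), show (fun x => σ • x + m₁) = A from rfl,
    tradeoff_map_measurableEquiv, tradeoff_stdGaussian_map_add _ hα0 hα1, norm_smul, norm_inv,
    Real.norm_eq_abs, norm_sub_rev, inv_mul_eq_div]

end Gaussian

/-- The trade-off function between two shifted isotropic Gaussians on `ℝ^d` is Gaussian: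
`T(N(a, σ²I_d), N(b, σ²I_d)) = G_{‖a−b‖₂/σ}` on `[0,1]`. -/
theorem isotropic_gaussian_tradeoff {d : ℕ} (σ : ℝ) (hσ : 0 < σ) (a b : Fin d → ℝ) :
    ∀ α ∈ Set.Icc (0 : ℝ) 1,
      tradeoff (Measure.pi fun i => gaussianReal (a i) (σ ^ 2).toNNReal)
        (Measure.pi fun i => gaussianReal (b i) (σ ^ 2).toNNReal) α
        = Gtrade (Real.sqrt (∑ i, (a i - b i) ^ 2) / σ) α := by
  rintro α ⟨hα0, hα1⟩
  rw [← tradeoff_map_measurableEquiv (MeasurableEquiv.toLp 2 (Fin d → ℝ)),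
    MeasurableEquiv.coe_toLp, map_toLp_pi_gaussianReal, map_toLp_pi_gaussianReal,
    tradeoff_stdGaussian_map_smul_add hσ.ne' _ _ hα0 hα1, abs_of_pos hσ, ← WithLp.toLp_sub,
    EuclideanSpace.norm_eq]
  simp [Real.norm_eq_abs, sq_abs]
end
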